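/- arXiv:2408.07935 — 2 statements merged into one kernel-verified Lean document; each statement's English description precedes it below -/
import Mathlib

section
/- For all positive real numbers α, β, σ, one has β²(1 + ln₊ σ) ≤ (1/2)α²σ² + β²(1 + ln₊(β/α)), where ln₊ a := max{ln a, 0}. -/
open Real

/-! Write `σ = (β / α) · t` with `t = α σ / β`. Since `log⁺` is subadditive on products,
`log⁺ σ ≤ log⁺ (β / α) + log⁺ t`, and `log⁺ t ≤ t² / 2`; multiplying by `β²` turns `β² t² / 2`
into `α² σ² / 2`. -/

theorem Real.posLog_le_sq_div_two (t : ℝ) : log⁺ t ≤ t ^ 2 / 2 := by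
  refine max_le (by positivity) ?_
  rcases eq_or_ne t 0 with rfl | ht
  · simp
  · have hlog : log |t| ≤ |t| - 1 := log_le_sub_one_of_pos (abs_pos.mpr ht)
    rw [log_abs] at hlog
    nlinarith [sq_abs t, sq_nonneg (|t| - 1)]

theorem stmt0_general (α β σ : ℝ) (hα : 0 < α) (hβ : 0 < β) :
    β ^ 2 * (1 + max (Real.log σ) 0) ≤
      (1 / 2) * α ^ 2 * σ ^ 2 + β ^ 2 * (1 + max (Real.log (β / α)) 0) := by
  have hsplit : σ = β / α * (α * σ / β) := by field_simp
  calc β ^ 2 * (1 + max (Real.log σ) 0) = β ^ 2 * (1 + log⁺ σ) := by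
        rw [posLog, max_comm]
    _ ≤ β ^ 2 * (1 + (log⁺ (β / α) + log⁺ (α * σ / β))) := by
        gcongr
        nth_rw 1 [hsplit]
        exact posLog_mul
    _ ≤ β ^ 2 * (1 + (log⁺ (β / α) + (α * σ / β) ^ 2 / 2)) := by
        gcongr
        exact posLog_le_sq_div_two _
    _ = (1 / 2) * α ^ 2 * σ ^ 2 + β ^ 2 * (1 + max (Real.log (β / α)) 0) := by
        rw [posLog, max_comm]
        field_simp
        ring

/-- For all positive reals α, β, σ: β²(1 + ln₊ σ) ≤ (1/2)α²σ² + β²(1 + ln₊(β/α)),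
where ln₊ a = max (ln a) 0. -/
theorem stmt0 (α β σ : ℝ) (hα : 0 < α) (hβ : 0 < β) (hσ : 0 < σ) :
    β ^ 2 * (1 + max (Real.log σ) 0) ≤
      (1 / 2) * α ^ 2 * σ ^ 2 + β ^ 2 * (1 + max (Real.log (β / α)) 0) :=
  stmt0_general α β σ hα hβ
end

section
/- There exists a constant C > 0, independent of α, β, σ, such that for all positive reals α, β, σ: β² ln(e + σ) ≤ C α² σ² + C β² ln(e + β/α). -/
open Real

/-!
Factor `σ = (β / α) * (α σ / β)`. Since `e + x y ≤ (e + x)(e + y)`, the logarithm splits as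
`log (e + σ) ≤ log (e + β / α) + log (e + α σ / β)`. The second term is at most `e - 1 + α σ / β`,
and `β² · α σ / β = α σ β` is absorbed by AM-GM into `α² σ²` and `β²`; the remaining multiple
of `β²` is absorbed into `β² log (e + β / α)`, which is at least `β²`.
-/

lemma add_mul_le_add_mul_add {c a b : ℝ} (hc : 1 ≤ c) (ha : 0 ≤ a) (hb : 0 ≤ b) :
    c + a * b ≤ (c + a) * (c + b) := by
  nlinarith [mul_nonneg ha hb, mul_nonneg (by linarith : (0 : ℝ) ≤ c) ha,
    mul_nonneg (by linarith : (0 : ℝ) ≤ c) hb]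

lemma log_exp_one_add_mul_le {a b : ℝ} (ha : 0 ≤ a) (hb : 0 ≤ b) :
    log (exp 1 + a * b) ≤ log (exp 1 + a) + log (exp 1 + b) := by
  have he : 1 ≤ exp 1 := one_le_exp zero_le_one
  rw [← log_mul (by positivity) (by positivity)]
  exact log_le_log (by positivity) (add_mul_le_add_mul_add he ha hb)

lemma one_le_log_exp_one_add {x : ℝ} (hx : 0 ≤ x) : 1 ≤ log (exp 1 + x) :=
  (le_log_iff_exp_le (by positivity)).mpr (le_add_of_nonneg_right hx)

lemma sq_mul_log_exp_one_add_div_le {a b : ℝ} (ha : 0 ≤ a) (hb : 0 < b) :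
    b ^ 2 * log (exp 1 + a / b) ≤ a ^ 2 + 3 * b ^ 2 := by
  have hlog : log (exp 1 + a / b) ≤ exp 1 + a / b - 1 := log_le_sub_one_of_pos (by positivity)
  have he : exp 1 ≤ 3 := by linarith [exp_one_lt_d9]
  calc b ^ 2 * log (exp 1 + a / b)
      ≤ b ^ 2 * (exp 1 + a / b - 1) := mul_le_mul_of_nonneg_left hlog (by positivity)
    _ = b ^ 2 * (exp 1 - 1) + a * b := by field_simp; ring
    _ ≤ a ^ 2 + 3 * b ^ 2 := by nlinarith [sq_nonneg (a - b)]

/-- There is a constant C > 0, independent of α, β, σ, such that for all positive reals,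
β² ln(e + σ) ≤ C α² σ² + C β² ln(e + β/α). -/
theorem stmt1 :
    ∃ C : ℝ, 0 < C ∧ ∀ α β σ : ℝ, 0 < α → 0 < β → 0 < σ →
      β ^ 2 * Real.log (Real.exp 1 + σ) ≤
        C * α ^ 2 * σ ^ 2 + C * β ^ 2 * Real.log (Real.exp 1 + β / α) := by
  refine ⟨4, by norm_num, fun α β σ hα hβ hσ => ?_⟩
  have hsplit : log (exp 1 + σ) ≤ log (exp 1 + β / α) + log (exp 1 + α * σ / β) := by
    have hσ_eq : β / α * (α * σ / β) = σ := by field_simp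
    simpa only [hσ_eq] using
      log_exp_one_add_mul_le (div_pos hβ hα).le (div_pos (mul_pos hα hσ) hβ).le
  have hsecond := sq_mul_log_exp_one_add_div_le (mul_pos hα hσ).le hβ
  rw [mul_pow] at hsecond
  have hfirst : β ^ 2 ≤ β ^ 2 * log (exp 1 + β / α) :=
    le_mul_of_one_le_right (by positivity) (one_le_log_exp_one_add (div_pos hβ hα).le)
  calc β ^ 2 * log (exp 1 + σ)
      ≤ β ^ 2 * log (exp 1 + β / α) + β ^ 2 * log (exp 1 + α * σ / β) := by
        rw [← mul_add]; exact mul_le_mul_of_nonneg_left hsplit (sq_nonneg β)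
    _ ≤ 4 * α ^ 2 * σ ^ 2 + 4 * β ^ 2 * log (exp 1 + β / α) := by
        linarith [mul_pos (pow_pos hα 2) (pow_pos hσ 2)]
end
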